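/- Let H be a finite-dimensional real inner product space, let r > 0, and let μ, v ∈ H with w = r•v − μ satisfying ‖w‖ > 1. Then the point q* = (1/r)·(1 − 1/‖w‖)•w is nonzero and satisfies the stationarity equation (1/‖q*‖)•q* + μ + r•(q* − v) = 0. -/

import Mathlib

/-!
`q*` is a positive multiple of `w`, so it points in the direction `w / ‖w‖`, while
`r • q* = w - w / ‖w‖`. Substituting both, the stationarity expression collapses to
`w + μ - r • v`, which vanishes by the definition of `w`.
-/

lemma one_div_mul_one_sub_one_div_pos {r a : ℝ} (hr : 0 < r) (ha : 1 < a) :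
    0 < (1 / r) * (1 - 1 / a) :=
  mul_pos (one_div_pos.2 hr) (sub_pos.2 ((div_lt_one (one_pos.trans ha)).2 ha))

section

variable {E : Type*} [NormedAddCommGroup E] [NormedSpace ℝ E]

noncomputable def softThreshold (r : ℝ) (w : E) : E := ((1 / r) * (1 - 1 / ‖w‖)) • w

lemma softThreshold_ne_zero {r : ℝ} (hr : 0 < r) {w : E} (hw : 1 < ‖w‖) :
    softThreshold r w ≠ 0 :=
  smul_ne_zero (one_div_mul_one_sub_one_div_pos hr hw).ne' (norm_pos_iff.1 (one_pos.trans hw))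

lemma normalize_softThreshold {r : ℝ} (hr : 0 < r) {w : E} (hw : 1 < ‖w‖) :
    NormedSpace.normalize (softThreshold r w) = NormedSpace.normalize w :=
  NormedSpace.normalize_smul_of_pos (one_div_mul_one_sub_one_div_pos hr hw) w

lemma smul_softThreshold {r : ℝ} (hr : r ≠ 0) (w : E) :
    r • softThreshold r w = w - NormedSpace.normalize w := by
  rw [softThreshold, NormedSpace.normalize, smul_smul, ← mul_assoc, mul_one_div_cancel hr, one_mul,
    sub_smul, one_smul, one_div]

end

theorem soft_thresholding_stationarity_general
    {H : Type*} [NormedAddCommGroup H] [InnerProductSpace ℝ H]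
    (r : ℝ) (hr : 0 < r) (μ v : H)
    (w : H) (hw : w = r • v - μ) (hnorm : 1 < ‖w‖)
    (qstar : H) (hqstar : qstar = ((1 / r) * (1 - 1 / ‖w‖)) • w) :
    qstar ≠ 0 ∧ (1 / ‖qstar‖) • qstar + μ + r • (qstar - v) = 0 := by
  change qstar = softThreshold r w at hqstar
  subst hqstar
  refine ⟨softThreshold_ne_zero hr hnorm, ?_⟩
  rw [one_div, ← NormedSpace.normalize, normalize_softThreshold hr hnorm, smul_sub,
    smul_softThreshold hr.ne', hw]
  abel

/-- The soft-thresholding point q* = (1/r)·(1 − 1/‖w‖)•w, for w = r•v − μ with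
‖w‖ > 1, is nonzero and satisfies the stationarity equation
(1/‖q*‖)•q* + μ + r•(q* − v) = 0 of the q-subproblem. -/
theorem soft_thresholding_stationarity
    {H : Type*} [NormedAddCommGroup H] [InnerProductSpace ℝ H] [FiniteDimensional ℝ H]
    (r : ℝ) (hr : 0 < r) (μ v : H)
    (w : H) (hw : w = r • v - μ) (hnorm : 1 < ‖w‖)
    (qstar : H) (hqstar : qstar = ((1 / r) * (1 - 1 / ‖w‖)) • w) :
    qstar ≠ 0 ∧ (1 / ‖qstar‖) • qstar + μ + r • (qstar - v) = 0 :=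
  soft_thresholding_stationarity_general r hr μ v w hw hnorm qstar hqstar
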